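/- arXiv:1801.09580 — 4 statements merged into one kernel-verified Lean document; each statement's English description precedes it below -/
import Mathlib

section
/- Let X̄ be a compact Hausdorff space, X ⊆ X̄ dense, and let (x_n), (y_n) be sequences in X. If |f(x_n) − f(y_n)| → 0 for every continuous f : X̄ → [0,1], then for every strictly increasing a : ℕ → ℕ the sets of cluster points of (x_{a(n)}) and of (y_{a(n)}) lying in X̄ ∖ X coincide. -/
open Filter Set

lemma stmt7_aux {Z : Type*} [TopologicalSpace Z] [CompactSpace Z] [T2Space Z]
    (X : Set Z)
    (x y : ℕ → Z) (hx : ∀ n, x n ∈ X)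
    (h : ∀ f : C(Z, ℝ), (∀ z, f z ∈ Set.Icc (0 : ℝ) 1) →
      Tendsto (fun n => |f (x n) - f (y n)|) atTop (nhds 0))
    (a : ℕ → ℕ) (ha : StrictMono a) :
    closure (Set.range fun n => x (a n)) \ X ⊆
      closure (Set.range fun n => y (a n)) \ X := by
  rintro z ⟨hz1, hz2⟩
  refine ⟨?_, hz2⟩
  by_contra hz3
  obtain ⟨f, hf0, hf1, hf01⟩ := exists_continuous_zero_one_of_isClosed
    isClosed_closure (isClosed_singleton (x := z))
    (Set.disjoint_singleton_right.mpr hz3)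
  have hyz : ∀ n, f (y (a n)) = 0 := fun n =>
    hf0 (subset_closure (Set.mem_range_self n))
  have hfz : f z = 1 := hf1 rfl
  have htend : Tendsto (fun n => |f (x (a n))|) atTop (nhds 0) := by
    have := (h f hf01).comp ha.tendsto_atTop
    simpa only [Function.comp_def, hyz, sub_zero] using this
  have hev : ∀ᶠ n in atTop, |f (x (a n))| < 1/2 :=
    htend.eventually_lt_const (by norm_num)
  obtain ⟨N, hN⟩ := eventually_atTop.1 hev
  have hsub : closure (Set.range fun n => x (a n)) ⊆
      ((fun n => x (a n)) '' Set.Iio N) ∪ {w | f w ≤ 1/2} := by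
    apply closure_minimal
    · rintro _ ⟨n, rfl⟩
      rcases lt_or_ge n N with hn | hn
      · exact Or.inl ⟨n, hn, rfl⟩
      · exact Or.inr (le_of_lt (lt_of_le_of_lt (le_abs_self _) (hN n hn)))
    · exact (((Set.finite_Iio N).image _).isClosed).union
        (isClosed_le f.continuous continuous_const)
  rcases hsub hz1 with hc | hc
  · obtain ⟨n, -, hn⟩ := hc
    exact hz2 (hn ▸ hx (a n))
  · simp only [Set.mem_setOf_eq, hfz] at hc
    norm_num at hc

theorem stmt7 {Z : Type*} [TopologicalSpace Z] [CompactSpace Z] [T2Space Z]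
    (X : Set Z) (hXdense : Dense X)
    (x y : ℕ → Z) (hx : ∀ n, x n ∈ X) (hy : ∀ n, y n ∈ X)
    (h : ∀ f : C(Z, ℝ), (∀ z, f z ∈ Set.Icc (0 : ℝ) 1) →
      Tendsto (fun n => |f (x n) - f (y n)|) atTop (nhds 0)) :
    ∀ a : ℕ → ℕ, StrictMono a →
      closure (Set.range fun n => x (a n)) \ X =
        closure (Set.range fun n => y (a n)) \ X := by
  intro a ha
  have h' : ∀ f : C(Z, ℝ), (∀ z, f z ∈ Set.Icc (0 : ℝ) 1) →
      Tendsto (fun n => |f (y n) - f (x n)|) atTop (nhds 0) := by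
    intro f hf
    simpa [abs_sub_comm] using h f hf
  exact le_antisymm (stmt7_aux X x y hx h a ha) (stmt7_aux X y x hy h' a ha)
end

section
/- Let (X,𝓑) be a set with a bounded structure and SCS a reflexive simple coarse structure on it. If (B_n) and (C_n) are uniformly bounded medium ends with B_n ∩ C_n ≠ ∅ for all n, then (B_n ∪ C_n) is a uniformly bounded medium end. -/
open Set

/-- A bounded structure on a set `X`. -/
def IsBoundedStructure {X : Type*} (𝓑 : Set (Set X)) : Prop :=
  (∀ x : X, ({x} : Set X) ∈ 𝓑) ∧
  (∀ A C : Set X, A ⊆ C → C ∈ 𝓑 → A ∈ 𝓑) ∧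
  (∀ A C : Set X, A ∈ 𝓑 → C ∈ 𝓑 → (A ∩ C).Nonempty → A ∪ C ∈ 𝓑)

/-- A simple end in `(X, 𝓑)`. -/
def IsSimpleEnd {X : Type*} (𝓑 : Set (Set X)) (x : ℕ → X) : Prop :=
  ∀ A ∈ 𝓑, {n : ℕ | x n ∈ A}.Finite

/-- A medium end in `(X, 𝓑)`: a sequence of nonempty bounded sets meeting each
bounded set only finitely often. -/
def IsMediumEnd {X : Type*} (𝓑 : Set (Set X)) (B : ℕ → Set X) : Prop :=
  (∀ n, (B n).Nonempty) ∧ (∀ n, B n ∈ 𝓑) ∧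
    ∀ A ∈ 𝓑, {n : ℕ | (B n ∩ A).Nonempty}.Finite

/-- A medium end is uniformly bounded for the simple coarse structure `E` if any
two choices of points from its terms give equivalent simple ends. -/
def IsUniformlyBoundedME {X : Type*} (E : (ℕ → X) → (ℕ → X) → Prop)
    (B : ℕ → Set X) : Prop :=
  ∀ x y : ℕ → X, (∀ n, x n ∈ B n) → (∀ n, y n ∈ B n) → E x y

theorem stmt8 {X : Type*} (𝓑 : Set (Set X)) (h𝓑 : IsBoundedStructure 𝓑)
    (E : (ℕ → X) → (ℕ → X) → Prop)
    (hrefl : ∀ x, IsSimpleEnd 𝓑 x → E x x)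
    (hsymm : ∀ x y, IsSimpleEnd 𝓑 x → IsSimpleEnd 𝓑 y → E x y → E y x)
    (htrans : ∀ x y z, IsSimpleEnd 𝓑 x → IsSimpleEnd 𝓑 y → IsSimpleEnd 𝓑 z →
      E x y → E y z → E x z)
    (hreflexiveSCS : ∀ x y, IsSimpleEnd 𝓑 x → IsSimpleEnd 𝓑 y → E x y →
      IsUniformlyBoundedME E (fun n => {x n, y n}))
    (B C : ℕ → Set X) (hB : IsMediumEnd 𝓑 B) (hC : IsMediumEnd 𝓑 C)
    (hBub : IsUniformlyBoundedME E B) (hCub : IsUniformlyBoundedME E C)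
    (hint : ∀ n, (B n ∩ C n).Nonempty) :
    IsMediumEnd 𝓑 (fun n => B n ∪ C n) ∧
      IsUniformlyBoundedME E (fun n => B n ∪ C n) := by
  obtain ⟨hBne, hBbd, hBfin⟩ := hB
  obtain ⟨hCne, hCbd, hCfin⟩ := hC
  -- any selection from a medium end is a simple end
  have hsel : ∀ (D : ℕ → Set X), (∀ A ∈ 𝓑, {n : ℕ | (D n ∩ A).Nonempty}.Finite) →
      ∀ x : ℕ → X, (∀ n, x n ∈ D n) → IsSimpleEnd 𝓑 x := by
    intro D hD x hx A hA
    exact (hD A hA).subset fun n hn => ⟨x n, hx n, hn⟩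
  have hBCfin : ∀ A ∈ 𝓑, {n : ℕ | ((B n ∪ C n) ∩ A).Nonempty}.Finite := by
    intro A hA
    refine ((hBfin A hA).union (hCfin A hA)).subset ?_
    rintro n ⟨w, hw, hwA⟩
    rcases hw with hw | hw
    · exact Or.inl ⟨w, hw, hwA⟩
    · exact Or.inr ⟨w, hw, hwA⟩
  have hme : IsMediumEnd 𝓑 (fun n => B n ∪ C n) := by
    refine ⟨fun n => ((hBne n).mono subset_union_left : (B n ∪ C n).Nonempty),
      fun n => h𝓑.2.2 (B n) (C n) (hBbd n) (hCbd n) (hint n), hBCfin⟩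
  refine ⟨hme, ?_⟩
  -- choose z n ∈ B n ∩ C n
  choose z hzB hzC using fun n => hint n
  have hzse : IsSimpleEnd 𝓑 z := hsel B hBfin z hzB
  intro x y hx hy
  have hxse : IsSimpleEnd 𝓑 x := hsel _ hBCfin x hx
  have hyse : IsSimpleEnd 𝓑 y := hsel _ hBCfin y hy
  -- key: any selection from B ∪ C is equivalent to z
  have key : ∀ w : ℕ → X, (∀ n, w n ∈ B n ∪ C n) → E w z := by
    intro w hw
    classical
    set w₁ : ℕ → X := fun n => if w n ∈ B n then w n else z n with hw₁
    set w₂ : ℕ → X := fun n => if w n ∈ B n then z n else w n with hw₂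
    have hw₁B : ∀ n, w₁ n ∈ B n := by
      intro n; simp only [hw₁]; split
      · assumption
      · exact hzB n
    have hw₂C : ∀ n, w₂ n ∈ C n := by
      intro n; simp only [hw₂]; split
      · exact hzC n
      · rcases hw n with h | h
        · exact absurd h (by assumption)
        · exact h
    have hw₁se : IsSimpleEnd 𝓑 w₁ := hsel B hBfin w₁ hw₁B
    have hw₂se : IsSimpleEnd 𝓑 w₂ := hsel C hCfin w₂ hw₂C
    have e₁ : E w₁ z := hBub w₁ z hw₁B hzB
    have e₂ : E w₂ z := hCub w₂ z hw₂C hzC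
    have e₁₂ : E w₁ w₂ := htrans w₁ z w₂ hw₁se hzse hw₂se e₁
      (hsymm w₂ z hw₂se hzse e₂)
    have hub := hreflexiveSCS w₁ w₂ hw₁se hw₂se e₁₂
    have hwmem : ∀ n, w n ∈ ({w₁ n, w₂ n} : Set X) := by
      intro n; simp only [hw₁, hw₂]; split
      · exact Or.inl rfl
      · exact Or.inr rfl
    have hww₁ : E w w₁ := hub w w₁ hwmem (fun n => Or.inl rfl)
    have hwse : IsSimpleEnd 𝓑 w := hsel _ hBCfin w hw
    exact htrans w w₁ z hwse hw₁se hzse hww₁ e₁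
  exact htrans x z y hxse hzse hyse (key x hx) (hsymm y z hyse hzse (key y hy))
end

section
/- Let (X̄, d_X), (Ȳ, d_Y) be metric spaces, X ⊆ X̄ and Y ⊆ Ȳ dense subsets with A = X̄ ∖ X nonempty, B = Ȳ ∖ Y nonempty and complete. Suppose f : X → Y satisfies: whenever (x_n), (y_n) are sequences in X with dist(x_n,A) → 0, dist(y_n,A) → 0, and d_X(x_n,y_n) → 0, then dist(f(x_n), B) → 0 and d_Y(f(x_n), f(y_n)) → 0. Then there is a unique function g : A → B such that for every sequence (x_n) in X converging in X̄ to a point a ∈ A, the sequence of nearest-corona approximations y_n ∈ B with d_Y(f(x_n), y_n) < 2·dist(f(x_n), B) converges to g(a). -/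
open Filter Metric Set

theorem stmt13 {Z W : Type*} [MetricSpace Z] [MetricSpace W]
    (X : Set Z) (Y : Set W) (hXdense : Dense X) (hYdense : Dense Y)
    (hA : (Xᶜ : Set Z).Nonempty) (hB : (Yᶜ : Set W).Nonempty)
    (hBcomplete : IsComplete (Yᶜ : Set W))
    (f : Z → W) (hf : ∀ z ∈ X, f z ∈ Y)
    (hcoarse : ∀ x y : ℕ → Z, (∀ n, x n ∈ X) → (∀ n, y n ∈ X) →
      Tendsto (fun n => Metric.infDist (x n) Xᶜ) atTop (nhds 0) →
      Tendsto (fun n => Metric.infDist (y n) Xᶜ) atTop (nhds 0) →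
      Tendsto (fun n => dist (x n) (y n)) atTop (nhds 0) →
      Tendsto (fun n => Metric.infDist (f (x n)) Yᶜ) atTop (nhds 0) ∧
        Tendsto (fun n => dist (f (x n)) (f (y n))) atTop (nhds 0)) :
    ∃! g : ↥(Xᶜ : Set Z) → W, (∀ a, g a ∈ Yᶜ) ∧
      ∀ (a : Z) (ha : a ∈ Xᶜ) (x : ℕ → Z), (∀ n, x n ∈ X) →
        Tendsto x atTop (nhds a) →
        ∀ y : ℕ → W,
          (∀ n, y n ∈ Yᶜ ∧ dist (f (x n)) (y n) < 2 * Metric.infDist (f (x n)) Yᶜ) →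
          Tendsto y atTop (nhds (g ⟨a, ha⟩)) := by
  have hYc : IsClosed (Yᶜ : Set W) := hBcomplete.isClosed
  -- approximant existence
  have happrox : ∀ w ∈ Y, ∃ v ∈ (Yᶜ : Set W), dist w v < 2 * infDist w Yᶜ := by
    intro w hw
    have hpos : 0 < infDist w Yᶜ :=
      (hYc.notMem_iff_infDist_pos hB).mp (by simpa using hw)
    exact (infDist_lt_iff hB).mp (by linarith)
  -- key lemma: distances of approximants along two sequences tending to the same boundary
  -- point tend to zero
  have key : ∀ (a : Z), a ∈ (Xᶜ : Set Z) → ∀ x x' : ℕ → Z,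
      (∀ n, x n ∈ X) → (∀ n, x' n ∈ X) →
      Tendsto x atTop (nhds a) → Tendsto x' atTop (nhds a) →
      ∀ y y' : ℕ → W,
      (∀ n, y n ∈ Yᶜ ∧ dist (f (x n)) (y n) < 2 * infDist (f (x n)) Yᶜ) →
      (∀ n, y' n ∈ Yᶜ ∧ dist (f (x' n)) (y' n) < 2 * infDist (f (x' n)) Yᶜ) →
      Tendsto (fun n => dist (y n) (y' n)) atTop (nhds 0) := by
    intro a ha x x' hxm hxm' hxt hxt' y y' hy hy'
    have hdx : Tendsto (fun n => dist (x n) a) atTop (nhds 0) :=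
      tendsto_iff_dist_tendsto_zero.mp hxt
    have hdx' : Tendsto (fun n => dist (x' n) a) atTop (nhds 0) :=
      tendsto_iff_dist_tendsto_zero.mp hxt'
    have hinf : Tendsto (fun n => infDist (x n) Xᶜ) atTop (nhds 0) :=
      squeeze_zero (fun n => infDist_nonneg) (fun n => infDist_le_dist_of_mem ha) hdx
    have hinf' : Tendsto (fun n => infDist (x' n) Xᶜ) atTop (nhds 0) :=
      squeeze_zero (fun n => infDist_nonneg) (fun n => infDist_le_dist_of_mem ha) hdx'
    have hxx' : Tendsto (fun n => dist (x n) (x' n)) atTop (nhds 0) := by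
      have : Tendsto (fun n => dist (x n) a + dist (x' n) a) atTop (nhds (0 + 0)) :=
        hdx.add hdx'
      refine squeeze_zero (fun n => dist_nonneg) (fun n => ?_) (by simpa using this)
      calc dist (x n) (x' n) ≤ dist (x n) a + dist a (x' n) := dist_triangle _ _ _
        _ = dist (x n) a + dist (x' n) a := by rw [dist_comm a]
    have hxx : Tendsto (fun n => dist (x n) (x n)) atTop (nhds 0) := by
      simpa using (tendsto_const_nhds : Tendsto (fun _ : ℕ => (0:ℝ)) atTop (nhds 0))
    have hx'x' : Tendsto (fun n => dist (x' n) (x' n)) atTop (nhds 0) := by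
      simpa using (tendsto_const_nhds : Tendsto (fun _ : ℕ => (0:ℝ)) atTop (nhds 0))
    obtain ⟨hfB, -⟩ := hcoarse x x hxm hxm hinf hinf hxx
    obtain ⟨hfB', -⟩ := hcoarse x' x' hxm' hxm' hinf' hinf' hx'x'
    obtain ⟨-, hff'⟩ := hcoarse x x' hxm hxm' hinf hinf' hxx'
    have hbound : Tendsto
        (fun n => 2 * infDist (f (x n)) Yᶜ + dist (f (x n)) (f (x' n))
          + 2 * infDist (f (x' n)) Yᶜ) atTop (nhds (2 * 0 + 0 + 2 * 0)) :=
      ((hfB.const_mul 2).add hff').add (hfB'.const_mul 2)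
    refine squeeze_zero (fun n => dist_nonneg) (fun n => ?_) (by simpa using hbound)
    calc dist (y n) (y' n)
        ≤ dist (y n) (f (x n)) + dist (f (x n)) (f (x' n)) + dist (f (x' n)) (y' n) :=
          dist_triangle4 _ _ _ _
      _ ≤ 2 * infDist (f (x n)) Yᶜ + dist (f (x n)) (f (x' n))
          + 2 * infDist (f (x' n)) Yᶜ := by
          have h1 := (hy n).2
          have h2 := (hy' n).2
          rw [dist_comm (y n)]
          linarith
  -- canonical approximating sequences
  have hseq : ∀ a : ↥(Xᶜ : Set Z), ∃ x : ℕ → Z, (∀ n, x n ∈ X) ∧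
      Tendsto x atTop (nhds (a : Z)) := fun a =>
    mem_closure_iff_seq_limit.mp (hXdense (a : Z))
  choose xs hxsmem hxstend using hseq
  have hys : ∀ (a : ↥(Xᶜ : Set Z)) (n : ℕ), ∃ v ∈ (Yᶜ : Set W),
      dist (f (xs a n)) v < 2 * infDist (f (xs a n)) Yᶜ :=
    fun a n => happrox _ (hf _ (hxsmem a n))
  choose ys hysB hysd using hys
  have hyspair : ∀ (a : ↥(Xᶜ : Set Z)) (n : ℕ),
      ys a n ∈ Yᶜ ∧ dist (f (xs a n)) (ys a n) < 2 * infDist (f (xs a n)) Yᶜ :=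
    fun a n => ⟨hysB a n, hysd a n⟩
  -- the canonical approximants form a Cauchy sequence
  have hcauchy : ∀ a : ↥(Xᶜ : Set Z), CauchySeq (ys a) := by
    intro a
    rw [Metric.cauchySeq_iff]
    by_contra h
    push_neg at h
    obtain ⟨ε, hε, hN⟩ := h
    choose m hm n hn hd using hN
    have hmt : Tendsto m atTop atTop := tendsto_atTop_mono hm tendsto_id
    have hnt : Tendsto n atTop atTop := tendsto_atTop_mono hn tendsto_id
    have hk := key a a.2 (xs a ∘ m) (xs a ∘ n) (fun k => hxsmem a (m k))
      (fun k => hxsmem a (n k)) ((hxstend a).comp hmt) ((hxstend a).comp hnt)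
      (ys a ∘ m) (ys a ∘ n) (fun k => hyspair a (m k)) (fun k => hyspair a (n k))
    obtain ⟨k, hk⟩ := (hk.eventually (gt_mem_nhds hε)).exists
    exact absurd (hd k) (not_le.mpr hk)
  -- limits in the complete corona
  have hlim : ∀ a : ↥(Xᶜ : Set Z), ∃ b ∈ (Yᶜ : Set W),
      Tendsto (ys a) atTop (nhds b) := fun a =>
    cauchySeq_tendsto_of_isComplete hBcomplete (hysB a) (hcauchy a)
  choose g hgB hgtend using hlim
  have hmain : ∀ (a : Z) (ha : a ∈ Xᶜ) (x : ℕ → Z), (∀ n, x n ∈ X) →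
      Tendsto x atTop (nhds a) →
      ∀ y : ℕ → W,
        (∀ n, y n ∈ Yᶜ ∧ dist (f (x n)) (y n) < 2 * Metric.infDist (f (x n)) Yᶜ) →
        Tendsto y atTop (nhds (g ⟨a, ha⟩)) := by
    intro a ha x hxm hxt y hy
    have hd := key a ha (xs ⟨a, ha⟩) x (hxsmem _) hxm (hxstend _) hxt
      (ys ⟨a, ha⟩) y (hyspair _) hy
    exact (hgtend ⟨a, ha⟩).congr_dist hd
  refine ⟨g, ⟨hgB, hmain⟩, ?_⟩
  intro g' hg'
  funext a
  obtain ⟨a, ha⟩ := a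
  have h1 := hg'.2 a ha (xs ⟨a, ha⟩) (hxsmem _) (hxstend _) (ys ⟨a, ha⟩) (hyspair _)
  have h2 := hmain a ha (xs ⟨a, ha⟩) (hxsmem _) (hxstend _) (ys ⟨a, ha⟩) (hyspair _)
  exact tendsto_nhds_unique h1 h2
end

section
/- Let X be a σ-compact locally compact Hausdorff space and X̄ a compactification. If (x_n) and (y_n) are simple ends in X (sequences escaping every compact subset of X) such that for some continuous f : X̄ → [0,1] the sequence |f(x_n) − f(y_n)| does not converge to 0, then there exists a strictly increasing a : ℕ → ℕ such that the coronas cl({x_{a(n)}}) ∖ X and cl({y_{a(n)}}) ∖ X in X̄ are disjoint and both nonempty. -/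
/-!
Since `f` has compact range, a subsequence `a` can be chosen along which `f ∘ x` and `f ∘ y`
converge to limits `u ≠ v`. A point of the corona of `x ∘ a` lies outside `X`, hence is a cluster
point of `x ∘ a`, so continuity of `f` forces its value under `f` to be `u`; likewise points of the
corona of `y ∘ a` are sent to `v`. The coronas are nonempty because the closure of the range of a
subsequence is compact and contains infinitely many terms, so it cannot lie inside `X`.
-/

open Filter Set Topology

section Corona

variable {Z : Type*} [TopologicalSpace Z]

def corona (X : Set Z) (s : ℕ → Z) : Set Z :=
  closure (range s) \ X

theorem mapClusterPt_of_mem_closure_range_of_notMem [T1Space Z] {s : ℕ → Z} {z : Z}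
    (hz : z ∈ closure (range s)) (hzs : z ∉ range s) : MapClusterPt z atTop s := by
  rw [mapClusterPt_atTop_iff_forall_mem_closure]
  intro i
  have hsplit : range s = s '' Iio i ∪ s '' Ici i := by
    rw [← image_union, Iio_union_Ici, image_univ]
  rw [hsplit, closure_union, ((finite_Iio i).image s).isClosed.closure_eq] at hz
  exact hz.resolve_left fun h => hzs (image_subset_range _ _ h)

theorem mapClusterPt_of_mem_corona [T1Space Z] {X : Set Z} {s : ℕ → Z} (hs : ∀ n, s n ∈ X)
    {z : Z} (hz : z ∈ corona X s) : MapClusterPt z atTop s :=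
  mapClusterPt_of_mem_closure_range_of_notMem hz.1 fun ⟨n, hn⟩ => hz.2 (hn ▸ hs n)

theorem apply_eq_of_mem_corona [T1Space Z] {Y : Type*} [TopologicalSpace Y] [T2Space Y]
    {X : Set Z} {s : ℕ → Z} (hs : ∀ n, s n ∈ X) {z : Z} (hz : z ∈ corona X s)
    {f : Z → Y} (hf : Continuous f) {u : Y} (hfs : Tendsto (f ∘ s) atTop (𝓝 u)) : f z = u :=
  have hcluster : MapClusterPt (f z) atTop (f ∘ s) :=
    (mapClusterPt_of_mem_corona hs hz).tendsto_comp (hf.tendsto z)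
  eq_of_nhds_neBot (hcluster.clusterPt.neBot.mono (inf_le_inf_left _ hfs))

theorem corona_comp_nonempty [CompactSpace Z] {X : Set Z} {s : ℕ → Z}
    (hs : ∀ K : Set Z, K ⊆ X → IsCompact K → {n : ℕ | s n ∈ K}.Finite)
    {a : ℕ → ℕ} (ha : Function.Injective a) : (corona X fun n => s (a n)).Nonempty := by
  by_contra h
  rw [corona, not_nonempty_iff_eq_empty, sdiff_eq_empty] at h
  exact infinite_of_injective_forall_mem (s := {m | s m ∈ closure (range fun n => s (a n))}) ha
    (fun n => subset_closure (mem_range_self n))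
    (hs _ h isClosed_closure.isCompact)

end Corona

theorem exists_strictMono_tendsto_ne_of_not_tendsto_dist {α : Type*} [MetricSpace α]
    {K : Set α} (hK : IsCompact K) {p q : ℕ → α} (hp : ∀ n, p n ∈ K) (hq : ∀ n, q n ∈ K)
    (h : ¬Tendsto (fun n => dist (p n) (q n)) atTop (𝓝 0)) :
    ∃ a : ℕ → ℕ, ∃ u v : α, StrictMono a ∧ u ≠ v ∧
      Tendsto (p ∘ a) atTop (𝓝 u) ∧ Tendsto (q ∘ a) atTop (𝓝 v) := by
  obtain ⟨ε, hε, hfreq⟩ : ∃ ε > 0, ∃ᶠ n in atTop, ε ≤ dist (p n) (q n) := by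
    rw [Metric.tendsto_nhds] at h
    push Not at h
    simpa only [Real.dist_eq, sub_zero, abs_dist] using h
  obtain ⟨b, hb, hbε⟩ := extraction_of_frequently_atTop hfreq
  obtain ⟨⟨u, v⟩, -, φ, hφ, hlim⟩ :=
    (hK.prod hK).tendsto_subseq (x := fun n => (p (b n), q (b n))) fun n => ⟨hp _, hq _⟩
  have hεuv : ε ≤ dist u v :=
    ge_of_tendsto ((continuous_dist.tendsto _).comp hlim) (Eventually.of_forall fun n => hbε _)
  exact ⟨b ∘ φ, u, v, hb.comp hφ, dist_pos.mp (hε.trans_le hεuv),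
    (continuous_fst.tendsto _).comp hlim, (continuous_snd.tendsto _).comp hlim⟩

theorem stmt16_general {Z : Type*} [TopologicalSpace Z] [CompactSpace Z] [T2Space Z]
    (X : Set Z)
    (x y : ℕ → Z) (hx : ∀ n, x n ∈ X) (hy : ∀ n, y n ∈ X)
    (hsex : ∀ K : Set Z, K ⊆ X → IsCompact K → {n : ℕ | x n ∈ K}.Finite)
    (hsey : ∀ K : Set Z, K ⊆ X → IsCompact K → {n : ℕ | y n ∈ K}.Finite)
    (f : C(Z, ℝ))
    (hnot : ¬ Tendsto (fun n => |f (x n) - f (y n)|) atTop (nhds 0)) :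
    ∃ a : ℕ → ℕ, StrictMono a ∧
      (closure (Set.range fun n => x (a n)) \ X) ∩
        (closure (Set.range fun n => y (a n)) \ X) = ∅ ∧
      (closure (Set.range fun n => x (a n)) \ X).Nonempty ∧
      (closure (Set.range fun n => y (a n)) \ X).Nonempty := by
  obtain ⟨a, u, v, ha, huv, hxu, hyv⟩ :=
    exists_strictMono_tendsto_ne_of_not_tendsto_dist (isCompact_range f.continuous)
      (p := fun n => f (x n)) (q := fun n => f (y n)) (fun _ => mem_range_self _)
      (fun _ => mem_range_self _) (by simpa only [Real.dist_eq] using hnot)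
  refine ⟨a, ha, ?_, corona_comp_nonempty hsex ha.injective,
    corona_comp_nonempty hsey ha.injective⟩
  refine eq_empty_of_forall_notMem fun z ⟨hzx, hzy⟩ => huv ?_
  rw [← apply_eq_of_mem_corona (fun _ => hx _) hzx f.continuous hxu,
    ← apply_eq_of_mem_corona (fun _ => hy _) hzy f.continuous hyv]

theorem stmt16 {Z : Type*} [TopologicalSpace Z] [CompactSpace Z] [T2Space Z]
    (X : Set Z) (hXdense : Dense X) (hXopen : IsOpen X)
    [SigmaCompactSpace ↥X]
    (x y : ℕ → Z) (hx : ∀ n, x n ∈ X) (hy : ∀ n, y n ∈ X)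
    (hsex : ∀ K : Set Z, K ⊆ X → IsCompact K → {n : ℕ | x n ∈ K}.Finite)
    (hsey : ∀ K : Set Z, K ⊆ X → IsCompact K → {n : ℕ | y n ∈ K}.Finite)
    (f : C(Z, ℝ)) (hf01 : ∀ z, f z ∈ Set.Icc (0 : ℝ) 1)
    (hnot : ¬ Tendsto (fun n => |f (x n) - f (y n)|) atTop (nhds 0)) :
    ∃ a : ℕ → ℕ, StrictMono a ∧
      (closure (Set.range fun n => x (a n)) \ X) ∩
        (closure (Set.range fun n => y (a n)) \ X) = ∅ ∧
      (closure (Set.range fun n => x (a n)) \ X).Nonempty ∧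
      (closure (Set.range fun n => y (a n)) \ X).Nonempty :=
  stmt16_general X x y hx hy hsex hsey f hnot
end
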